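/- arXiv:1907.05215 — 4 statements merged into one kernel-verified Lean document; each statement's English description precedes it below -/
import Mathlib

section
/- Let E be a row-finite directed graph without sinks satisfying Condition (K). Then E satisfies Condition (DI) if and only if E satisfies Condition (DL). -/
variable {V E : Type}

/-- A finite path in a directed graph with source map `s` and target map `t`.
Paths of length 0 are identified with their source vertex. -/
structure FPath (s t : E → V) : Type where
  src : V
  edges : List E
  chain : edges.Chain' (fun e f => t e = s f)
  head_src : ∀ e ∈ edges.head?, s e = src

namespace FPath

variable {s t : E → V}

/-- The terminal vertex of a finite path. -/
def trg (p : FPath s t) : V := (p.edges.getLast?).elim p.src t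

/-- The length-zero path at a vertex. -/
def ofVertex (s t : E → V) (v : V) : FPath s t :=
  ⟨v, [], List.isChain_nil, by simp⟩

end FPath

/-- `x : ℕ → E` is an infinite path when consecutive edges match up. -/
def IsInfPath (s t : E → V) (x : ℕ → E) : Prop := ∀ i, t (x i) = s (x (i + 1))

/-- The infinite path space `E^∞`. -/
abbrev InfPath (s t : E → V) : Type := {x : ℕ → E // IsInfPath s t x}

/-- The cylinder set `Z(p)` of a finite path `p`. -/
def Cyl (s t : E → V) (p : FPath s t) : Set (InfPath s t) :=
  {x | s (x.1 0) = p.src ∧ ∀ (i : ℕ) (h : i < p.edges.length), x.1 i = p.edges[i]'h}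

/-- The cylinder set `Z(v)` of a vertex: all infinite paths starting at `v`. -/
def CylV (s t : E → V) (v : V) : Set (InfPath s t) := {x | s (x.1 0) = v}

/-- A graph is row-finite when each vertex emits finitely many edges. -/
def RowFinite (s : E → V) : Prop := ∀ v : V, {e : E | s e = v}.Finite

/-- A graph has no sinks when each vertex emits at least one edge. -/
def NoSinks (s : E → V) : Prop := ∀ v : V, ∃ e : E, s e = v

/-- `Reach s t v w` : there is a finite path (possibly empty) from `v` to `w`. -/
def Reach (s t : E → V) (v w : V) : Prop := ∃ p : FPath s t, p.src = v ∧ p.trg = w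

/-- A cycle (loop): a nonempty finite path returning to its source. -/
def IsCycle {s t : E → V} (p : FPath s t) : Prop := p.edges ≠ [] ∧ p.trg = p.src

/-- A cycle that visits its base only at the start and the end. -/
def IsStrictCycle {s t : E → V} (p : FPath s t) : Prop :=
  IsCycle p ∧ ∀ (i : ℕ) (h : i < p.edges.length), 0 < i → s (p.edges[i]'h) ≠ p.src

/-- The vertices visited by a finite path. -/
def OnPath {s t : E → V} (p : FPath s t) (u : V) : Prop :=
  u = p.src ∨ ∃ e ∈ p.edges, t e = u

/-- `V^2` : vertices which are the base of at least two distinct cycles. -/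
def V2set (s t : E → V) : Set V :=
  {v | ∃ p q : FPath s t, p.src = v ∧ q.src = v ∧ IsStrictCycle p ∧ IsStrictCycle q ∧
    p.edges ≠ q.edges}

/-- `V^1` : vertices which are the base of exactly one cycle. -/
def V1set (s t : E → V) : Set V :=
  {v | ∃! l : List E, ∃ p : FPath s t, p.src = v ∧ IsStrictCycle p ∧ p.edges = l}

/-- Condition (K): no vertex is the base of exactly one cycle. -/
def CondK (s t : E → V) : Prop := V1set s t = ∅

/-- Vertices which lie on a loop (cycle). -/
def OnLoop (s t : E → V) : Set V :=
  {u | ∃ p : FPath s t, IsCycle p ∧ OnPath p u}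

/-- The path `p` passes through a vertex of the set `S`. -/
def Passes {s t : E → V} (p : FPath s t) (S : Set V) : Prop := ∃ u ∈ S, OnPath p u

/-- `B` is a finite decomposition of `Z(v)` into disjoint cylinder sets of paths from `v`. -/
def Decomp (s t : E → V) (v : V) (B : List (FPath s t)) : Prop :=
  (∀ β ∈ B, β.src = v) ∧
  (⋃ β ∈ B, Cyl s t β) = CylV s t v ∧
  (B.map (Cyl s t)).Pairwise Disjoint

/-- Condition (I). -/
def CondI (s t : E → V) : Prop :=
  ∀ v : V, ∃ α : FPath s t, α.src = v ∧ α.trg ∈ V2set s t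

/-- Condition (DI). -/
def CondDI (s t : E → V) : Prop :=
  ∀ v : V, ∃ B : List (FPath s t), Decomp s t v B ∧
    ∀ β ∈ B, ∃ α : FPath s t, α.src = v ∧ α.trg = β.trg ∧ Passes α (V2set s t)

/-- Condition (DL). -/
def CondDL (s t : E → V) : Prop :=
  ∀ v : V, ∃ B : List (FPath s t), Decomp s t v B ∧
    ∀ β ∈ B, ∃ α : FPath s t, α.src = v ∧ α.trg = β.trg ∧ Passes α (OnLoop s t)

/-- `Z(μ)` is `(G^a,2,1)`-paradoxical: two families of pairs of finite paths
`(α_i, β_i)` and `(γ_j, δ_j)` with `t(α)=t(β)`, the cylinders of the second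
coordinates each covering `Z(μ)`, and the cylinders of the first coordinates
pairwise disjoint subsets of `Z(μ)`. -/
def Paradoxical (s t : E → V) (μ : FPath s t) : Prop :=
  ∃ A C : List (FPath s t × FPath s t),
    (∀ q ∈ A ++ C, q.1.trg = q.2.trg ∧ Cyl s t q.1 ⊆ Cyl s t μ) ∧
    (⋃ q ∈ A, Cyl s t q.2) = Cyl s t μ ∧
    (⋃ q ∈ C, Cyl s t q.2) = Cyl s t μ ∧
    ((A ++ C).map (fun q => Cyl s t q.1)).Pairwise Disjoint

/-- Paradoxicality of the cylinder set `Z(v)` of a vertex. -/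
def ParadoxicalV (s t : E → V) (v : V) : Prop := Paradoxical s t (FPath.ofVertex s t v)

/-- A maximal tail. -/
def MaximalTail (s t : E → V) (M : Set V) : Prop :=
  M.Nonempty ∧
  (∀ v w : V, Reach s t v w → w ∈ M → v ∈ M) ∧
  (∀ v ∈ M, (∃ e : E, s e = v) → ∃ e : E, s e = v ∧ t e ∈ M) ∧
  (∀ v ∈ M, ∀ w ∈ M, ∃ y ∈ M, Reach s t v y ∧ Reach s t w y)

/-- The shift map on the infinite path space. -/
def shiftMap (s t : E → V) (x : InfPath s t) : InfPath s t :=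
  ⟨fun i => x.1 (i + 1), fun i => x.2 (i + 1)⟩

/-- The cylinder set of a single edge. -/
def edgeCyl (s t : E → V) (e : E) : Set (InfPath s t) := {x | x.1 0 = e}

/-- Eventual periodicity of an infinite sequence of edges. -/
def EvPeriodic (x : ℕ → E) : Prop := ∃ N p : ℕ, 1 ≤ p ∧ ∀ i, N ≤ i → x (i + p) = x i

/-- A cycle has an exit. -/
def HasExit {s t : E → V} (c : FPath s t) : Prop :=
  ∃ (i : ℕ) (h : i < c.edges.length) (e : E),
    e ≠ c.edges[i]'h ∧ s e = s (c.edges[i]'h)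

/-- The length-one path consisting of a single edge. -/
def path1 (s t : E → V) (w : V) (a : E) (h : s a = w) : FPath s t :=
  ⟨w, [a], List.isChain_singleton a, by simp [h]⟩

/-- The length-two path consisting of two composable edges. -/
def path2 (s t : E → V) (w : V) (a b : E) (ha : s a = w) (hab : t a = s b) : FPath s t :=
  ⟨w, [a, b], List.isChain_pair.mpr hab, by simp [ha]⟩


section Aux

variable {s t : E → V}

private lemma head?_take' (l : List E) (i : ℕ) (hi : 0 < i) : (l.take i).head? = l.head? := by
  cases l with
  | nil => simp
  | cons a l => cases i with
    | zero => omega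
    | succ j => simp

private lemma trg_of_getLast? {p : FPath s t} {e : E} (h : p.edges.getLast? = some e) :
    p.trg = t e := by simp [FPath.trg, h]

/-- Any cycle based at `u` can be shortened to a strict cycle based at `u`. -/
private lemma exists_strict (q : FPath s t) (hq : IsCycle q) :
    ∃ r : FPath s t, r.src = q.src ∧ IsStrictCycle r := by
  generalize hn : q.edges.length = n
  induction n using Nat.strong_induction_on generalizing q with
  | _ n ih =>
  by_cases hs : IsStrictCycle q
  · exact ⟨q, rfl, hs⟩
  · have h' : ¬ ∀ (i : ℕ) (h : i < q.edges.length), 0 < i → s (q.edges[i]'h) ≠ q.src :=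
      fun h => hs ⟨hq, h⟩
    push_neg at h'
    obtain ⟨i, hi, hipos, hieq⟩ := h'
    obtain ⟨j, rfl⟩ : ∃ j, i = j + 1 := ⟨i - 1, by omega⟩
    have hjlt : j < q.edges.length := by omega
    have htk : q.edges.take (j+1) = q.edges.take j ++ [q.edges[j]] := by
      rw [List.take_succ, List.getElem?_eq_getElem hjlt]; rfl
    have hchain : t (q.edges[j]'hjlt) = s (q.edges[j+1]'hi) := by
      have := List.isChain_iff_getElem.1 q.chain j (by omega)
      simpa using this
    set r0 : FPath s t := ⟨q.src, q.edges.take (j+1), q.chain.take _, by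
      intro e he
      rw [head?_take' _ _ (by omega)] at he
      exact q.head_src e he⟩ with hr0
    have hr0trg : r0.trg = q.src := by
      have : r0.edges.getLast? = some (q.edges[j]'hjlt) := by
        show (q.edges.take (j+1)).getLast? = _
        rw [htk, List.getLast?_concat]
      rw [trg_of_getLast? this, hchain, hieq]
    have hr0len : r0.edges.length = j + 1 := by
      show (q.edges.take (j+1)).length = j + 1
      rw [List.length_take]; omega
    have hr0cyc : IsCycle r0 :=
      ⟨List.length_pos_iff.mp (by rw [hr0len]; omega), hr0trg⟩
    obtain ⟨r, hr1, hr2⟩ := ih (j+1) (by omega) r0 hr0cyc hr0len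
    exact ⟨r, hr1, hr2⟩

/-- Any vertex on a cycle is the base of some cycle (rotation). -/
private lemma exists_cycle_at (p : FPath s t) (hp : IsCycle p) (u : V) (hu : OnPath p u) :
    ∃ q : FPath s t, q.src = u ∧ IsCycle q := by
  rcases hu with rfl | ⟨e, he, rfl⟩
  · exact ⟨p, rfl, hp⟩
  · obtain ⟨l1, l2, hl⟩ := List.append_of_mem he
    have hpc : (l1 ++ e :: l2).Chain' (fun a b => t a = s b) := hl ▸ p.chain
    obtain ⟨c1, c2⟩ := List.isChain_split.1 hpc
    have hhead1 : (l1 ++ [e]).head? = p.edges.head? := by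
      rw [hl]
      cases l1 <;> simp
    have hsrc1 : ∀ y ∈ (l1 ++ [e]).head?, s y = p.src := by
      intro y hy
      exact p.head_src y (hhead1 ▸ hy)
    refine ⟨⟨t e, l2 ++ (l1 ++ [e]), ?_, ?_⟩, rfl, by simp, ?_⟩
    · apply List.isChain_append.2
      refine ⟨c2.tail, c1, ?_⟩
      intro x hx y hy
      have hl2ne : l2 ≠ [] := by
        intro h; rw [h] at hx; simp at hx
      have hx' : p.edges.getLast? = some x := by
        rw [hl, show l1 ++ e :: l2 = (l1 ++ [e]) ++ l2 by simp,
          List.getLast?_append_of_ne_nil _ hl2ne]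
        exact hx
      have htx : t x = p.src := by
        rw [← trg_of_getLast? hx', hp.2]
      rw [htx, hsrc1 y hy]
    · intro f hf
      cases hl2 : l2 with
      | nil =>
        subst hl2
        simp only [List.nil_append] at hf
        have hte : t e = p.src := by
          have : p.edges.getLast? = some e := by
            rw [hl]; simp [List.getLast?_concat]
          rw [← trg_of_getLast? this, hp.2]
        rw [hsrc1 f hf, hte]
      | cons a l2' =>
        subst hl2
        simp only [List.cons_append, List.head?_cons, Option.mem_some_iff] at hf
        subst hf
        exact (List.isChain_cons_cons.1 c2).1.symm ▸ rfl
    · show FPath.trg _ = t e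
      apply trg_of_getLast?
      show (l2 ++ (l1 ++ [e])).getLast? = some e
      rw [← List.append_assoc, List.getLast?_concat]

private lemma onLoop_eq_V2 (hK : CondK s t) : OnLoop s t = V2set s t := by
  ext u
  constructor
  · rintro ⟨p, hp, hu⟩
    obtain ⟨q, hqs, hqc⟩ := exists_cycle_at p hp u hu
    obtain ⟨r, hrs, hr⟩ := exists_strict q hqc
    rw [hqs] at hrs
    by_contra hu2
    have hmem : u ∈ V1set s t := by
      refine ⟨r.edges, ⟨r, hrs, hr, rfl⟩, ?_⟩
      rintro l ⟨p', hp's, hp'c, rfl⟩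
      by_contra hne
      exact hu2 ⟨p', r, hp's, hrs, hp'c, hr, hne⟩
    have hK' : V1set s t = ∅ := hK
    rw [hK'] at hmem
    exact hmem
  · rintro ⟨p, q, hps, hqs, hp, hq, hne⟩
    exact ⟨p, hp.1, Or.inl hps.symm⟩

end Aux

/-- for a row-finite graph without sinks satisfying Condition (K),
Conditions (DI) and (DL) are equivalent. -/
theorem stmt8 (s t : E → V) (hrf : RowFinite s) (hns : NoSinks s)
    (hK : CondK s t) : CondDI s t ↔ CondDL s t := by
  have h := onLoop_eq_V2 (s := s) (t := t) hK
  simp only [CondDI, CondDL, h]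
end

section
/- Let E be a row-finite directed graph without sinks satisfying Condition (K). If E satisfies Condition (DI), then for every vertex v the cylinder set Z(v) is paradoxical: there exist finite families of pairs of finite paths (α_i, β_i)_{i=1}^n and (γ_j, δ_j)_{j=1}^m with t(α_i) = t(β_i), t(γ_j) = t(δ_j), all α_i, γ_j starting at v, such that ⋃_i Z(β_i) = ⋃_j Z(δ_j) = Z(v) and the cylinder sets Z(α_1), ..., Z(α_n), Z(γ_1), ..., Z(γ_m) are pairwise disjoint. -/
variable {V E : Type}

namespace FPath

variable {s t : E → V}

lemma trg_eq_getLast (p : FPath s t) (h : p.edges ≠ []) : p.trg = t (p.edges.getLast h) := by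
  simp [trg, List.getLast?_eq_getLast_of_ne_nil h]

lemma trg_eq_src (p : FPath s t) (h : p.edges = []) : p.trg = p.src := by
  simp [trg, h]

@[simp] lemma trg_ofVertex (v : V) : (ofVertex s t v).trg = v := rfl
@[simp] lemma src_ofVertex (v : V) : (ofVertex s t v).src = v := rfl
@[simp] lemma edges_ofVertex (v : V) : (ofVertex s t v).edges = [] := rfl

lemma src_head (p : FPath s t) (h : p.edges ≠ []) : s (p.edges.head h) = p.src :=
  p.head_src _ (by simp [List.head?_eq_head h])

lemma chain_rel (p : FPath s t) (i : ℕ) (h : i + 1 < p.edges.length) :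
    t (p.edges[i]'(by omega)) = s (p.edges[i+1]'h) := by
  have := List.isChain_iff_getElem.1 p.chain i (by omega)
  simpa [List.get_eq_getElem] using this

lemma src_getElem_zero (p : FPath s t) (h : 0 < p.edges.length) :
    s (p.edges[0]'h) = p.src := by
  have hne : p.edges ≠ [] := List.ne_nil_of_length_pos h
  have := p.src_head hne
  rwa [List.head_eq_getElem] at this

lemma trg_eq_getElem (p : FPath s t) (h : 0 < p.edges.length) :
    p.trg = t (p.edges[p.edges.length - 1]'(by omega)) := by
  rw [p.trg_eq_getLast (List.ne_nil_of_length_pos h), List.getLast_eq_getElem]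

lemma trg_eq_getElem' (p : FPath s t) {k : ℕ} (h : p.edges.length = k + 1) :
    p.trg = t (p.edges[k]'(by omega)) := by
  have := p.trg_eq_getElem (by omega)
  simpa [h] using this

def comp (p q : FPath s t) (h : p.trg = q.src) : FPath s t where
  src := p.src
  edges := p.edges ++ q.edges
  chain := by
    apply List.isChain_append.2
    refine ⟨p.chain, q.chain, ?_⟩
    intro x hx y hy
    obtain ⟨hne, rfl⟩ := List.mem_getLast?_eq_getLast hx
    have hx' : t (p.edges.getLast hne) = p.trg := (p.trg_eq_getLast hne).symm
    have hy' : s y = q.src := q.head_src _ hy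
    simp only [hx', hy', h]
  head_src := by
    intro e he
    rcases hp : p.edges with _ | ⟨a, l⟩
    · rw [hp] at he
      simp only [List.nil_append] at he
      have := q.head_src e he
      rw [this, ← h, p.trg_eq_src hp]
    · rw [hp] at he
      simp only [List.cons_append, List.head?_cons, Option.mem_some_iff] at he
      subst he
      exact p.head_src a (by simp [hp])

@[simp] lemma comp_src (p q : FPath s t) (h) : (comp p q h).src = p.src := rfl
@[simp] lemma comp_edges (p q : FPath s t) (h) : (comp p q h).edges = p.edges ++ q.edges := rfl

@[simp] lemma comp_trg (p q : FPath s t) (h) : (comp p q h).trg = q.trg := by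
  rcases hq : q.edges with _ | ⟨a, l⟩
  · rcases hp : p.edges with _ | ⟨b, m⟩
    · rw [trg_eq_src _ (by simp [comp, hq, hp]), q.trg_eq_src hq, ← h, p.trg_eq_src hp]
      rfl
    · rw [q.trg_eq_src hq, ← h]
      have h1 : (comp p q h).edges ≠ [] := by simp [comp, hq, hp]
      rw [trg_eq_getLast _ h1, p.trg_eq_getLast (by simp [hp])]
      congr 1
      simp [comp, hq]
  · have h1 : (comp p q h).edges ≠ [] := by simp [comp, hq]
    rw [trg_eq_getLast _ h1, q.trg_eq_getLast (by simp [hq])]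
    congr 1
    simp only [comp]
    rw [List.getLast_append_of_ne_nil (by simp [hq])]

end FPath

open FPath

lemma cyl_disjoint_of_ne {s t : E → V} {p q : FPath s t} {i : ℕ}
    (h1 : i < p.edges.length) (h2 : i < q.edges.length)
    (hne : p.edges[i]'h1 ≠ q.edges[i]'h2) : Disjoint (Cyl s t p) (Cyl s t q) := by
  rw [Set.disjoint_left]
  rintro x ⟨-, hp⟩ ⟨-, hq⟩
  exact hne ((hp i h1).symm.trans (hq i h2))

lemma cyl_ofVertex (s t : E → V) (v : V) : Cyl s t (FPath.ofVertex s t v) = CylV s t v := by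
  ext x
  simp only [Cyl, CylV, Set.mem_setOf_eq, src_ofVertex, edges_ofVertex]
  refine ⟨fun h => h.1, fun h => ⟨h, fun i hi => by simp at hi⟩⟩

lemma cyl_subset_ofVertex {s t : E → V} {p : FPath s t} {v : V} (h : p.src = v) :
    Cyl s t p ⊆ Cyl s t (FPath.ofVertex s t v) := by
  rintro x ⟨h0, -⟩
  exact ⟨by simp [h0, h], fun i hi => by simp at hi⟩

lemma cycle_pow {s t : E → V} {c : FPath s t} (hc : IsCycle c) (m : ℕ) :
    ∃ p : FPath s t, p.src = c.src ∧ p.trg = c.src ∧ m ≤ p.edges.length := by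
  induction m with
  | zero => exact ⟨ofVertex s t c.src, rfl, rfl, Nat.zero_le _⟩
  | succ n ih =>
    obtain ⟨p, h1, h2, h3⟩ := ih
    refine ⟨c.comp p (by rw [hc.2, h1]), by simp, by simp [h2], ?_⟩
    simp only [comp_edges, List.length_append]
    have : 0 < c.edges.length := List.length_pos_iff.2 hc.1
    omega

lemma split_at {s t : E → V} (α : FPath s t) (u : V) (h : OnPath α u) :
    ∃ σ ρ : FPath s t, σ.src = α.src ∧ σ.trg = u ∧ ρ.src = u ∧ ρ.trg = α.trg := by
  rcases h with rfl | ⟨e, he, hte⟩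
  · exact ⟨ofVertex s t α.src, α, rfl, rfl, rfl, rfl⟩
  · obtain ⟨j, hj, hje⟩ := List.mem_iff_getElem.1 he
    have hσ : ∃ σ : FPath s t, σ.src = α.src ∧ σ.edges = α.edges.take (j+1) := by
      refine ⟨⟨α.src, α.edges.take (j+1), α.chain.prefix (List.take_prefix _ _), ?_⟩, rfl, rfl⟩
      intro e' he'
      apply α.head_src
      rcases hl : α.edges with _ | ⟨a, l'⟩
      · rw [hl] at he'; simp at he'
      · rw [hl] at he'
        simp only [List.take_succ_cons, List.head?_cons, Option.mem_some_iff] at he' ⊢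
        exact he'.symm ▸ rfl

    obtain ⟨σ, hσs, hσe⟩ := hσ
    have hρ : ∃ ρ : FPath s t, ρ.src = u ∧ ρ.edges = α.edges.drop (j+1) := by
      refine ⟨⟨u, α.edges.drop (j+1), α.chain.suffix (List.drop_suffix _ _), ?_⟩, rfl, rfl⟩
      intro e' he'
      have hd : (α.edges.drop (j+1)) ≠ [] := by
        intro hnil; rw [hnil] at he'; simp at he'
      have hlen : j + 1 < α.edges.length := by
        have := List.length_pos_iff.2 hd
        simp only [List.length_drop] at this
        omega
      have he0 : e' = (α.edges.drop (j+1)).head hd := by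
        have := List.head?_eq_head hd
        rw [this] at he'
        exact (Option.mem_some_iff.1 he').symm
      rw [he0, List.head_eq_getElem, List.getElem_drop]
      have := α.chain_rel j (by omega)
      simp only [Nat.add_zero] at *
      rw [← this, hje, hte]
    obtain ⟨ρ, hρs, hρe⟩ := hρ
    refine ⟨σ, ρ, hσs, ?_, hρs, ?_⟩
    · have hσlen : σ.edges.length = j + 1 := by
        rw [hσe]; simp [List.length_take]; omega
      rw [trg_eq_getElem' σ hσlen]
      have : σ.edges[j]'(by omega) = α.edges[j]'hj := by
        simp only [hσe, List.getElem_take]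
      rw [this, hje, hte]
    · by_cases hd : α.edges.drop (j+1) = []
      · have hlen : α.edges.length = j + 1 := by
          have := congrArg List.length hd
          simp only [List.length_drop, List.length_nil] at this
          omega
        rw [trg_eq_src ρ (by rw [hρe, hd]), hρs, trg_eq_getElem' α hlen, hje, hte]
      · have hlen : j + 1 < α.edges.length := by
          have := List.length_pos_iff.2 hd
          simp only [List.length_drop] at this
          omega
        have hρlen : ρ.edges.length = (α.edges.length - (j+1) - 1) + 1 := by
          rw [hρe]; simp only [List.length_drop]; omega
        rw [trg_eq_getElem' ρ hρlen, trg_eq_getElem' α (k := α.edges.length - 1) (by omega)]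
        have : ρ.edges[α.edges.length - (j+1) - 1]'(by omega)
            = α.edges[α.edges.length - 1]'(by omega) := by
          have hidx : j + 1 + (α.edges.length - (j + 1) - 1) = α.edges.length - 1 := by omega
          simp only [hρe, List.getElem_drop, hidx]
        rw [this]

lemma strict_diff {s t : E → V} {p q : FPath s t} (hsrc : p.src = q.src)
    (hp : IsStrictCycle p) (hq : IsStrictCycle q) (hne : p.edges ≠ q.edges) :
    ∃ (i : ℕ) (h1 : i < p.edges.length) (h2 : i < q.edges.length),
      p.edges[i]'h1 ≠ q.edges[i]'h2 := by
  by_contra hcon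
  push_neg at hcon
  have key : ∀ a b : FPath s t, a.src = b.src → IsStrictCycle a → IsStrictCycle b →
      (∀ (i : ℕ) (h1 : i < a.edges.length) (h2 : i < b.edges.length),
        a.edges[i]'h1 = b.edges[i]'h2) →
      a.edges.length < b.edges.length → False := by
    intro a b hab hsa hsb hagree hlt
    have h1 : 0 < a.edges.length := List.length_pos_iff.2 hsa.1.1
    obtain ⟨k, hk⟩ := Nat.exists_eq_succ_of_ne_zero (Nat.pos_iff_ne_zero.1 h1)
    have hcr := b.chain_rel k (by omega)
    have hsk : s (b.edges[k+1]'(by omega)) = b.src := by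
      rw [← hcr]
      have hk' : (a.edges[k]'(by omega)) = (b.edges[k]'(by omega)) :=
        hagree k (by omega) (by omega)
      rw [← hk']
      have := trg_eq_getElem' a hk
      rw [← this, hsa.1.2, hab]
    exact hsb.2 (k+1) (by omega) (by omega) hsk
  rcases Nat.lt_trichotomy p.edges.length q.edges.length with hlt | heq | hgt
  · exact key p q hsrc hp hq hcon hlt
  · exact hne (List.ext_getElem heq fun i h1 h2 => hcon i h1 h2)
  · exact key q p hsrc.symm hq hp (fun i h1 h2 => (hcon i h2 h1).symm) hgt

structure ParKit (s t : E → V) (v w : V) : Type where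
  σ : FPath s t
  ρ : FPath s t
  c : FPath s t
  d : FPath s t
  j : ℕ
  hσ : σ.src = v
  hσρ : σ.trg = ρ.src
  hρ : ρ.trg = w
  hcs : c.src = σ.trg
  hds : d.src = σ.trg
  hcc : IsCycle c
  hdc : IsCycle d
  hjc : j < c.edges.length
  hjd : j < d.edges.length
  hne : c.edges[j]'hjc ≠ d.edges[j]'hjd

namespace ParKit
variable {s t : E → V} {v w : V}

def C (k : ParKit s t v w) : ℕ := max k.c.edges.length k.d.edges.length

def bnd (k : ParKit s t v w) (n : ℕ) : ℕ := k.σ.edges.length + n * k.C + k.j + 1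

lemma bnd_mono (k : ParKit s t v w) {n m : ℕ} (h : n ≤ m) : k.bnd n ≤ k.bnd m := by
  unfold bnd
  have := Nat.mul_le_mul_right k.C h
  omega

end ParKit

lemma kit_exists {s t : E → V} {v : V} (α : FPath s t) (hs : α.src = v)
    (hp : Passes α (V2set s t)) : Nonempty (ParKit s t v α.trg) := by
  obtain ⟨u, hu, hon⟩ := hp
  obtain ⟨σ, ρ, hσs, hσt, hρs, hρt⟩ := split_at α u hon
  obtain ⟨c, d, hcsrc, hdsrc, hcstrict, hdstrict, hcd⟩ := hu
  obtain ⟨i, h1, h2, hne⟩ := strict_diff (by rw [hcsrc, hdsrc]) hcstrict hdstrict hcd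
  exact ⟨⟨σ, ρ, c, d, i, hσs.trans hs, hσt.trans hρs.symm, hρt,
    hcsrc.trans hσt.symm, hdsrc.trans hσt.symm, hcstrict.1, hdstrict.1, h1, h2, hne⟩⟩

lemma kit_avoid {s t : E → V} {v w : V} (k : ParKit s t v w) (W : List (List E))
    (hW : ∀ l ∈ W, k.bnd W.length ≤ l.length) :
    ∃ τ : FPath s t, τ.src = v ∧ τ.trg = k.σ.trg ∧
      τ.edges.length ≤ k.σ.edges.length + W.length * k.C ∧
      ∀ l ∈ W, ∃ (i : ℕ) (h1 : i < τ.edges.length) (h2 : i < l.length),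
        τ.edges[i]'h1 ≠ l[i]'h2 := by
  induction W with
  | nil => exact ⟨k.σ, k.hσ, rfl, by simp, by simp⟩
  | cons l W' ih =>
    obtain ⟨τ, hτs, hτt, hτl, hτd⟩ := ih (fun l' hl' =>
      le_trans (k.bnd_mono (by simp)) (hW l' (List.mem_cons_of_mem _ hl')))
    have hll := hW l (List.mem_cons_self)
    have hCc : k.c.edges.length ≤ k.C := le_max_left _ _
    have hCd : k.d.edges.length ≤ k.C := le_max_right _ _
    have hidx : k.j + τ.edges.length < l.length := by
      unfold ParKit.bnd at hll
      simp only [List.length_cons] at hll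
      have : (W'.length + 1) * k.C = W'.length * k.C + k.C := by ring
      omega
    have pick : ∃ e : FPath s t, e.src = k.σ.trg ∧ e.trg = k.σ.trg ∧
        e.edges.length ≤ k.C ∧ ∃ (hj : k.j < e.edges.length),
        e.edges[k.j]'hj ≠ l[k.j + τ.edges.length]'hidx := by
      by_cases hc : k.c.edges[k.j]'k.hjc = l[k.j + τ.edges.length]'hidx
      · refine ⟨k.d, k.hds, k.hdc.2.trans k.hds, hCd, k.hjd, ?_⟩
        rw [← hc]
        exact fun h => k.hne (h.symm)
      · exact ⟨k.c, k.hcs, k.hcc.2.trans k.hcs, hCc, k.hjc, hc⟩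
    obtain ⟨e, hes, het, hel, hj, hediff⟩ := pick
    refine ⟨τ.comp e (hτt.trans hes.symm), by simp [hτs], by simp [het], ?_, ?_⟩
    · simp only [FPath.comp_edges, List.length_append, List.length_cons]
      have : (W'.length + 1) * k.C = W'.length * k.C + k.C := by ring
      omega
    · intro l'' hl''
      rcases List.mem_cons.1 hl'' with rfl | hl''
      · refine ⟨k.j + τ.edges.length, ?_, hidx, ?_⟩
        · simp only [FPath.comp_edges, List.length_append]; omega
        · have := List.getElem_append_right' (l₁ := τ.edges) hj
          simp only [FPath.comp_edges]
          rw [← this]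
          exact hediff
      · obtain ⟨i, h1, h2, hd⟩ := hτd l'' hl''
        refine ⟨i, ?_, h2, ?_⟩
        · simp only [FPath.comp_edges, List.length_append]; omega
        · simp only [FPath.comp_edges]
          rw [List.getElem_append_left h1]
          exact hd

lemma kit_path {s t : E → V} {v w : V} (k : ParKit s t v w) (N : ℕ) (W : List (List E))
    (hW : ∀ l ∈ W, k.bnd W.length ≤ l.length) :
    ∃ μ : FPath s t, μ.src = v ∧ μ.trg = w ∧ N < μ.edges.length ∧
      ∀ l ∈ W, ∃ (i : ℕ) (h1 : i < μ.edges.length) (h2 : i < l.length),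
        μ.edges[i]'h1 ≠ l[i]'h2 := by
  obtain ⟨τ, hτs, hτt, hτl, hτd⟩ := kit_avoid k W hW
  obtain ⟨pad, hps, hpt, hpl⟩ := cycle_pow k.hcc (N + 1)
  have h1 : τ.trg = pad.src := by rw [hτt, hps, k.hcs]
  have h2 : (τ.comp pad h1).trg = k.ρ.src := by
    simp only [FPath.comp_trg]
    rw [hpt, k.hcs, k.hσρ]
  refine ⟨(τ.comp pad h1).comp k.ρ h2, by simp [hτs], by simp [k.hρ], ?_, ?_⟩
  · simp only [FPath.comp_edges, List.length_append]; omega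
  · intro l hl
    obtain ⟨i, hi1, hi2, hd⟩ := hτd l hl
    refine ⟨i, by simp only [FPath.comp_edges, List.length_append]; omega, hi2, ?_⟩
    simp only [FPath.comp_edges]
    rw [List.getElem_append_left (by simp only [List.length_append]; omega),
        List.getElem_append_left hi1]
    exact hd

lemma buildM {s t : E → V} {v : V} (N : ℕ) (L : List ((w : V) × ParKit s t v w))
    (hN : ∀ K ∈ L, K.2.bnd L.length ≤ N) :
    ∃ M : List (FPath s t),
      List.Forall₂ (fun (μ : FPath s t) (K : (w : V) × ParKit s t v w) =>
        μ.src = v ∧ μ.trg = K.1 ∧ N < μ.edges.length) M L ∧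
      M.Pairwise (fun p q => ∃ (i : ℕ) (h1 : i < p.edges.length) (h2 : i < q.edges.length),
        p.edges[i]'h1 ≠ q.edges[i]'h2) := by
  induction L with
  | nil => exact ⟨[], List.Forall₂.nil, List.Pairwise.nil⟩
  | cons K L' ih =>
    obtain ⟨M', hF, hP⟩ := ih (fun K' hK' =>
      le_trans (K'.2.bnd_mono (by simp)) (hN K' (List.mem_cons_of_mem _ hK')))
    have hlong : ∀ μ ∈ M', N < μ.edges.length := by
      intro μ hμ
      obtain ⟨i, hi, rfl⟩ := List.mem_iff_getElem.1 hμ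
      have := (List.forall₂_iff_get.1 hF).2 i hi (by rw [← hF.length_eq]; exact hi)
      exact this.2.2
    have hW : ∀ l ∈ M'.map FPath.edges, K.2.bnd (M'.map FPath.edges).length ≤ l.length := by
      intro l hl
      obtain ⟨μ, hμ, rfl⟩ := List.mem_map.1 hl
      calc K.2.bnd (M'.map FPath.edges).length
          ≤ K.2.bnd (K :: L').length := K.2.bnd_mono (by
            simp only [List.length_map, List.length_cons, hF.length_eq]; omega)
        _ ≤ N := hN K (List.mem_cons_self)
        _ ≤ μ.edges.length := le_of_lt (hlong μ hμ)
    obtain ⟨μ, hμs, hμt, hμl, hμd⟩ := kit_path K.2 N (M'.map FPath.edges) hW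
    refine ⟨μ :: M', List.Forall₂.cons ⟨hμs, hμt, hμl⟩ hF, List.Pairwise.cons ?_ hP⟩
    intro b hb
    obtain ⟨i, h1, h2, hd⟩ := hμd b.edges (List.mem_map_of_mem hb)
    exact ⟨i, h1, h2, hd⟩

/-- if a row-finite graph without sinks satisfies Condition (K)
(every vertex on a cycle is in `V^2`) and Condition (DI), then every cylinder set
`Z(v)` is paradoxical. -/
theorem stmt12 (s t : E → V) (hrf : RowFinite s) (hns : NoSinks s)
    (hK : OnLoop s t ⊆ V2set s t) (hDI : CondDI s t) :
    ∀ v : V, ParadoxicalV s t v := by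
  intro v
  classical
  obtain ⟨B, ⟨hBsrc, hBU, hBdisj⟩, hBα⟩ := hDI v
  have hkit : ∀ β ∈ B, Nonempty (ParKit s t v β.trg) := by
    intro β hβ
    obtain ⟨α, hαs, hαt, hαp⟩ := hBα β hβ
    exact hαt ▸ kit_exists α hαs hαp
  let KB : List ((w : V) × ParKit s t v w) :=
    B.attach.map (fun x => ⟨x.1.trg, (hkit x.1 x.2).some⟩)
  set n := B.length with hn
  have hKBlen : KB.length = n := by simp [KB, hn]
  have hKBget : ∀ (i : ℕ) (h : i < n), (KB[i]'(by omega)).1 = (B[i]'h).trg := by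
    intro i h
    simp [KB]
  set L := KB ++ KB with hL
  have hLlen : L.length = n + n := by simp [L, hKBlen]
  set N := (L.map (fun K => K.2.bnd L.length)).sum with hN
  have hNle : ∀ K ∈ L, K.2.bnd L.length ≤ N :=
    fun K hK => List.le_sum_of_mem (List.mem_map_of_mem hK)
  obtain ⟨M, hF, hP⟩ := buildM N L hNle
  have hMlen : M.length = n + n := by rw [hF.length_eq, hLlen]
  have hget := (List.forall₂_iff_get.1 hF).2
  -- facts about M entries
  have hM1 : ∀ (i : ℕ) (h : i < n), (M[i]'(by omega)).src = v ∧
      (M[i]'(by omega)).trg = (B[i]'h).trg := by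
    intro i h
    have := hget i (by omega) (by rw [hLlen]; omega)
    refine ⟨this.1, ?_⟩
    have hLi : (L[i]'(by rw [hLlen]; omega)).1 = (B[i]'h).trg := by
      have : (L[i]'(by rw [hLlen]; omega)) = KB[i]'(by rw [hKBlen]; omega) := by
        simp only [L]
        exact List.getElem_append_left (by rw [hKBlen]; omega)
      rw [this, hKBget i h]
    simp only [List.get_eq_getElem] at this
    rw [this.2.1, hLi]
  have hM2 : ∀ (i : ℕ) (h : i < n), (M[n + i]'(by omega)).src = v ∧
      (M[n + i]'(by omega)).trg = (B[i]'h).trg := by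
    intro i h
    have := hget (n + i) (by omega) (by rw [hLlen]; omega)
    refine ⟨this.1, ?_⟩
    have hLi : (L[n + i]'(by rw [hLlen]; omega)).1 = (B[i]'h).trg := by
      have h2 : (L[n + i]'(by rw [hLlen]; omega)) = KB[i]'(by rw [hKBlen]; omega) := by
        simp only [L]
        rw [List.getElem_append_right (by rw [hKBlen]; omega)]
        congr 1
        rw [hKBlen]
        omega
      rw [h2, hKBget i h]
    simp only [List.get_eq_getElem] at this
    rw [this.2.1, hLi]
  -- the two families
  set A := (M.take n).zip B with hA
  set C := (M.drop n).zip B with hC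
  have hlenTake : (M.take n).length = n := by rw [List.length_take, hMlen]; omega
  have hlenDrop : (M.drop n).length = n := by rw [List.length_drop, hMlen]; omega
  have hAlen : A.length = n := by rw [hA, List.length_zip, hlenTake]; omega
  have hClen : C.length = n := by rw [hC, List.length_zip, hlenDrop]; omega
  refine ⟨A, C, ?_, ?_, ?_, ?_⟩
  · -- targets and subsets
    intro q hq
    rcases List.mem_append.1 hq with hq | hq
    · obtain ⟨i, hi, rfl⟩ := List.mem_iff_getElem.1 hq
      have hin : i < n := hAlen ▸ hi
      simp only [hA, List.getElem_zip, List.getElem_take]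
      exact ⟨(hM1 i hin).2, cyl_subset_ofVertex (hM1 i hin).1⟩
    · obtain ⟨i, hi, rfl⟩ := List.mem_iff_getElem.1 hq
      have hin : i < n := hClen ▸ hi
      simp only [hC, List.getElem_zip, List.getElem_drop]
      exact ⟨(hM2 i hin).2, cyl_subset_ofVertex (hM2 i hin).1⟩
  · rw [cyl_ofVertex, ← hBU]
    ext x
    simp only [Set.mem_iUnion, exists_prop]
    constructor
    · rintro ⟨q, hq, hx⟩
      exact ⟨q.2, (List.of_mem_zip (hA ▸ hq)).2, hx⟩
    · rintro ⟨β, hβ, hx⟩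
      obtain ⟨i, hi, rfl⟩ := List.mem_iff_getElem.1 hβ
      refine ⟨((M.take n)[i]'(by rw [hlenTake]; exact hi), B[i]'hi), ?_, hx⟩
      rw [hA]
      apply List.mem_iff_getElem.2
      exact ⟨i, by rw [List.length_zip, hlenTake]; omega, by rw [List.getElem_zip]⟩
  · rw [cyl_ofVertex, ← hBU]
    ext x
    simp only [Set.mem_iUnion, exists_prop]
    constructor
    · rintro ⟨q, hq, hx⟩
      exact ⟨q.2, (List.of_mem_zip (hC ▸ hq)).2, hx⟩
    · rintro ⟨β, hβ, hx⟩
      obtain ⟨i, hi, rfl⟩ := List.mem_iff_getElem.1 hβ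
      refine ⟨((M.drop n)[i]'(by rw [hlenDrop]; exact hi), B[i]'hi), ?_, hx⟩
      rw [hC]
      apply List.mem_iff_getElem.2
      exact ⟨i, by rw [List.length_zip, hlenDrop]; omega, by rw [List.getElem_zip]⟩
  · have hmapA : A.map Prod.fst = M.take n := by
      rw [hA]; exact List.map_fst_zip (by rw [hlenTake])
    have hmapC : C.map Prod.fst = M.drop n := by
      rw [hC]; exact List.map_fst_zip (by rw [hlenDrop])
    have hfun : (fun q : FPath s t × FPath s t => Cyl s t q.1) = (Cyl s t) ∘ Prod.fst := rfl
    have hEq : (A ++ C).map (fun q => Cyl s t q.1) = M.map (Cyl s t) := by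
      rw [hfun, List.map_append, ← List.map_map, ← List.map_map, hmapA, hmapC,
          ← List.map_append, List.take_append_drop]
    rw [hEq, List.pairwise_map]
    exact hP.imp (fun {p q} hd => by
      obtain ⟨i, h1, h2, hne'⟩ := hd
      exact cyl_disjoint_of_ne h1 h2 hne')
end

section
/- Let E be a directed graph and let v be a vertex with at least two distinct cycles μ ≠ ν based at v (i.e., v ∈ V^2), such that μ and ν return to v only at their ends. Then for every m ∈ ℕ there exist finite paths μ_1, ..., μ_m with s(μ_k) = t(μ_k) = v for all k and Z(μ_k) ∩ Z(μ_l) = ∅ for all k ≠ l. -/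
variable {V E : Type}

lemma FPath.trg_eq {s t : E → V} (p : FPath s t) (h : p.edges ≠ []) :
    p.trg = t (p.edges.getLast h) := by
  simp [FPath.trg, List.getLast?_eq_getLast h]

def FPath.app {s t : E → V} (p q : FPath s t) (h : p.trg = q.src) : FPath s t where
  src := p.src
  edges := p.edges ++ q.edges
  chain := by
    refine p.chain.append q.chain ?_
    intro x hx y hy
    rw [q.head_src y hy, ← h, FPath.trg]
    have : p.edges.getLast? = some x := hx
    simp [this]
  head_src := by
    intro e he
    rcases hp : p.edges with _ | ⟨a, l⟩
    · have hpt : p.trg = p.src := by simp [FPath.trg, hp]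
      rw [hp] at he; simp at he
      rw [q.head_src e he, ← h, hpt]
    · rw [hp] at he
      simp [List.head?_append] at he
      exact he ▸ p.head_src a (by rw [hp]; rfl)

lemma FPath.app_trg {s t : E → V} (p q : FPath s t) (h : p.trg = q.src) (hq : q.edges ≠ []) :
    (p.app q h).trg = q.trg := by
  simp [FPath.trg, FPath.app, List.getLast?_append, List.getLast?_eq_getLast hq]

/-- if `v` is the base of two distinct cycles (returning to `v` only
at their ends), then for every `m` there are `m` return paths at `v` with pairwise
disjoint cylinder sets. -/
theorem stmt13 (s t : E → V) (v : V) (μ ν : FPath s t)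
    (hμ : μ.src = v) (hν : ν.src = v) (hμc : IsStrictCycle μ) (hνc : IsStrictCycle ν)
    (hne : μ.edges ≠ ν.edges) :
    ∀ m : ℕ, ∃ ps : Fin m → FPath s t,
      (∀ k : Fin m, (ps k).src = v ∧ (ps k).trg = v) ∧
      ∀ k l : Fin m, k ≠ l → Disjoint (Cyl s t (ps k)) (Cyl s t (ps l)) := by
  intro m
  have chain_fact : ∀ (p : FPath s t) (i : ℕ) (h : i + 1 < p.edges.length),
      t (p.edges[i]'(by omega)) = s (p.edges[i+1]'h) := by
    intro p i h
    have := List.isChain_iff_getElem.mp p.chain i (by omega)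
    simpa using this
  have hμne := hμc.1.1
  have hνne := hνc.1.1
  have hμt : μ.trg = v := hμc.1.2.trans hμ
  have hνt : ν.trg = v := hνc.1.2.trans hν
  -- divergence
  have key : ∀ (p q : FPath s t), p.src = v → q.src = v → IsStrictCycle p → IsStrictCycle q →
      p.edges ≠ q.edges → ∀ (hlen : p.edges.length ≤ q.edges.length),
      ¬ (∀ j (hj : j < p.edges.length), p.edges[j]'hj = q.edges[j]'(by omega)) := by
    intro p q hp hq hpc hqc hpq hlen hall
    rcases Nat.lt_or_ge p.edges.length q.edges.length with hlt | hge
    · have hpne := hpc.1.1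
      have hM : 0 < p.edges.length := List.length_pos_iff.mpr hpne
      have h1 : s (q.edges[p.edges.length]'hlt) = q.src := by
        have h2 : t (q.edges[p.edges.length - 1]'(by omega)) =
            s (q.edges[p.edges.length]'hlt) := by
          have := chain_fact q (p.edges.length - 1) (by omega)
          convert this using 3 <;> omega
        rw [← h2]
        have h3 : q.edges[p.edges.length - 1]'(by omega) =
            p.edges[p.edges.length - 1]'(by omega) := (hall _ (by omega)).symm
        rw [h3]
        have h4 : p.edges.getLast hpne = p.edges[p.edges.length - 1]'(by omega) := by
          simp [List.getLast_eq_getElem]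
        rw [← h4, ← p.trg_eq hpne, hpc.1.2, hp, hq]
      exact hqc.2 _ hlt hM h1
    · have : p.edges = q.edges := by
        apply List.ext_getElem (by omega)
        intro i h1 h2
        exact hall i h1
      exact hpq this
  have hdiv : ∃ j, ∃ (h1 : j < μ.edges.length) (h2 : j < ν.edges.length),
      μ.edges[j]'h1 ≠ ν.edges[j]'h2 := by
    rcases Nat.le_total μ.edges.length ν.edges.length with hle | hle
    · have := key μ ν hμ hν hμc hνc hne hle
      push_neg at this
      obtain ⟨j, hj, hj2⟩ := this
      exact ⟨j, hj, by omega, hj2⟩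
    · have := key ν μ hν hμ hνc hμc (Ne.symm hne) hle
      push_neg at this
      obtain ⟨j, hj, hj2⟩ := this
      exact ⟨j, by omega, hj, Ne.symm hj2⟩
  obtain ⟨j, hjμ, hjν, hjne⟩ := hdiv
  set M := μ.edges.length with hM
  -- powers of μ.edges
  let μpow : ℕ → List E := fun k => Nat.rec [] (fun _ l => μ.edges ++ l) k
  have μpow_len : ∀ k, (μpow k).length = k * M := by
    intro k
    induction k with
    | zero => simp [μpow]
    | succ n ih => show (μ.edges ++ μpow n).length = _; simp [ih]; ring
  have μpow_add : ∀ a b, μpow (a + b) = μpow a ++ μpow b := by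
    intro a b
    induction a with
    | zero => simp [μpow]
    | succ n ih =>
        have : n + 1 + b = (n + b) + 1 := by omega
        rw [this]
        show μ.edges ++ μpow (n + b) = (μ.edges ++ μpow n) ++ μpow b
        rw [ih, List.append_assoc]
  -- rep k = μ^k ν with invariants
  let rep : ∀ k : ℕ, {p : FPath s t // p.src = v ∧ p.trg = v ∧ p.edges = μpow k ++ ν.edges} :=
    fun k => Nat.rec ⟨ν, hν, hνt, by simp [μpow]⟩
      (fun n r => ⟨μ.app r.1 (by rw [hμt, r.2.1]),
        hμ,
        by rw [FPath.app_trg _ _ _ (by rw [r.2.2.2]; simp [hνne])]; exact r.2.2.1,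
        by show μ.edges ++ r.1.edges = (μ.edges ++ μpow n) ++ ν.edges
           rw [r.2.2.2, List.append_assoc]⟩) k
  refine ⟨fun k => (rep k).1, fun k => ⟨(rep k).2.1, (rep k).2.2.1⟩, ?_⟩
  -- disjointness
  have main : ∀ k l : ℕ, k < l → Disjoint (Cyl s t (rep k).1) (Cyl s t (rep l).1) := by
    intro k l hkl
    rw [Set.disjoint_left]
    rintro x ⟨-, hx1⟩ ⟨-, hx2⟩
    have hMpos : 0 < M := List.length_pos_iff.mpr hμne
    obtain ⟨d, hd⟩ : ∃ d, l = k + (d + 1) := ⟨l - k - 1, by omega⟩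
    -- value from rep k
    have e1 : (rep k).1.edges = μpow k ++ ν.edges := (rep k).2.2.2
    have e2 : (rep l).1.edges = μpow k ++ (μ.edges ++ (μpow d ++ ν.edges)) := by
      rw [(rep l).2.2.2, hd, μpow_add]
      show (μpow k ++ (μ.edges ++ μpow d)) ++ ν.edges = _
      simp [List.append_assoc]
    have hlen1 : k * M + j < (rep k).1.edges.length := by
      rw [e1]; simp [μpow_len]; omega
    have hlen2 : k * M + j < (rep l).1.edges.length := by
      rw [e2]; simp [μpow_len]; omega
    have v1 : x.1 (k * M + j) = ν.edges[j]'hjν := by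
      rw [hx1 _ hlen1]
      have : ((rep k).1.edges)[k * M + j]'hlen1 =
          (μpow k ++ ν.edges)[k * M + j]'(e1 ▸ hlen1) := by
        congr 1 <;> rw [e1]
      rw [this, List.getElem_append_right (by rw [μpow_len]; omega)]
      congr 1
      rw [μpow_len]; omega
    have v2 : x.1 (k * M + j) = μ.edges[j]'hjμ := by
      rw [hx2 _ hlen2]
      have : ((rep l).1.edges)[k * M + j]'hlen2 =
          (μpow k ++ (μ.edges ++ (μpow d ++ ν.edges)))[k * M + j]'(e2 ▸ hlen2) := by
        congr 1 <;> rw [e2]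
      rw [this, List.getElem_append_right (by rw [μpow_len]; omega)]
      have hidx : k * M + j - (μpow k).length = j := by rw [μpow_len]; omega
      simp only [hidx]
      exact List.getElem_append_left hjμ
    exact hjne (v2.symm.trans v1)
  intro k l hkl
  rcases Nat.lt_or_ge k.1 l.1 with h | h
  · exact main k l h
  · have : l.1 < k.1 := by
      rcases Nat.lt_or_ge l.1 k.1 with h2 | h2
      · exact h2
      · exact absurd (Fin.ext (by omega)) hkl
    exact (main l k this).symm
end

section
/- Let E be a row-finite directed graph without sinks in which every cycle has an exit. Then every vertex v is the source of an aperiodic infinite path, i.e., an infinite path x with s(x_1) = v that is not eventually periodic. -/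
variable {V E : Type}

section AuxStmt16

variable {V E : Type}

/-- Greedy infinite continuation from a vertex, given a choice of outgoing edges. -/
noncomputable def extPath (t : E → V) (next : V → E) (w : V) : ℕ → E
  | 0 => next w
  | n + 1 => next (t (extPath t next w n))

lemma extPath_isInf (s t : E → V) (next : V → E) (hnext : ∀ u, s (next u) = u) (w : V) :
    IsInfPath s t (extPath t next w) := by
  intro i
  simp [extPath, hnext]

lemma step_lemma (s t : E → V) (next : V → E) (hnext : ∀ u, s (next u) = u)
    (hex : ∀ c : FPath s t, IsCycle c → HasExit c)
    (x : ℕ → E) (hx : IsInfPath s t x) (n N p : ℕ) (hp : 1 ≤ p) :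
    ∃ (x' : ℕ → E) (m : ℕ), IsInfPath s t x' ∧ n < m ∧ (∀ j, j < n → x' j = x j) ∧
      s (x' 0) = s (x 0) ∧ ∃ i, N ≤ i ∧ i + p < m ∧ x' (i + p) ≠ x' i := by
  by_cases hcc : ∃ i, N ≤ i ∧ x (i + p) ≠ x i
  · obtain ⟨i, hiN, hne⟩ := hcc
    exact ⟨x, max (i + p + 1) (n + 1), hx, by omega, fun _ _ => rfl, rfl,
      i, hiN, by omega, hne⟩
  · push_neg at hcc
    set M := max N n with hMdef
    have hNM : N ≤ M := le_max_left N n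
    have hnM : n ≤ M := le_max_right N n
    set f : Fin p → E := fun j => x (M + j) with hf
    have hlen : (List.ofFn f).length = p := List.length_ofFn
    have hchain : (List.ofFn f).Chain' (fun a b => t a = s b) := by
      rw [List.Chain', List.isChain_iff_getElem]
      intro i h
      rw [List.getElem_ofFn, List.getElem_ofFn]
      simp only [Fin.cast, hf]
      simpa [Nat.add_assoc] using hx (M + i)
    have hhead : ∀ e ∈ (List.ofFn f).head?, s e = s (x M) := by
      intro e he
      have h0 : 0 < (List.ofFn f).length := by omega
      rw [List.head?_eq_getElem?, List.getElem?_eq_getElem h0] at he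
      rw [List.getElem_ofFn] at he
      simp only [Option.mem_def, Option.some.injEq] at he
      subst he
      simp [hf]
    set c : FPath s t := ⟨s (x M), List.ofFn f, hchain, hhead⟩ with hcdef
    have htrg : c.trg = c.src := by
      show ((List.ofFn f).getLast?).elim _ t = _
      have hplt : (List.ofFn f).length - 1 < (List.ofFn f).length := by omega
      rw [List.getLast?_eq_getElem?, List.getElem?_eq_getElem hplt]
      rw [List.getElem_ofFn]
      simp only [Option.elim, hf]
      have h1 := hx (M + ((List.ofFn f).length - 1))
      have h2 : M + ((List.ofFn f).length - 1) + 1 = M + p := by omega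
      rw [h2] at h1
      rw [hcc M hNM] at h1
      exact h1
    have hcyc : IsCycle c := by
      refine ⟨?_, htrg⟩
      intro h
      have h2 : (List.ofFn f).length = 0 := by
        rw [show List.ofFn f = c.edges from rfl, h]
        rfl
      omega
    obtain ⟨j, hj, e, hne, hse⟩ := hex c hcyc
    have hjp : j < p := by
      have := hj
      rw [show c.edges = List.ofFn f from rfl, hlen] at this
      exact this
    have hcj : c.edges[j]'hj = x (M + j) := by
      show (List.ofFn f)[j]'_ = _
      rw [List.getElem_ofFn]
    rw [hcj] at hne hse
    set K := M + j + p with hK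
    refine ⟨fun i => if i < K then x i else if i = K then e
        else extPath t next (t e) (i - K - 1), K + 1, ?_, by omega, ?_, ?_, M + j,
        by omega, by omega, ?_⟩
    · intro i
      rcases lt_trichotomy (i + 1) K with h | h | h
      · have hi : i < K := by omega
        simp only [if_pos hi, if_pos h]
        exact hx i
      · have hi : i < K := by omega
        simp only [if_pos hi, if_neg (show ¬ (i + 1 < K) by omega), if_pos h]
        have h1 := hx i
        rw [h] at h1
        rw [h1, hse, hK]
        exact congrArg s (hcc (M + j) (by omega))
      · rcases eq_or_lt_of_le (show K ≤ i by omega) with h0 | h0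
        · subst h0
          simp only [if_neg (lt_irrefl K), if_pos rfl,
            if_neg (show ¬ (K + 1 < K) by omega), if_neg (show ¬ (K + 1 = K) by omega)]
          have h1 : K + 1 - K - 1 = 0 := by omega
          rw [h1]
          simp [extPath, hnext]
        · show t (if i < K then x i else if i = K then e else extPath t next (t e) (i - K - 1)) =
            s (if i + 1 < K then x (i + 1) else if i + 1 = K then e
              else extPath t next (t e) (i + 1 - K - 1))
          rw [if_neg (show ¬ (i < K) by omega), if_neg (show ¬ (i = K) by omega),
            if_neg (show ¬ (i + 1 < K) by omega), if_neg (show ¬ (i + 1 = K) by omega)]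
          have h1 : i + 1 - K - 1 = (i - K - 1) + 1 := by omega
          rw [h1]
          simp [extPath, hnext]
    · intro j' hj'
      show (if j' < K then x j' else if j' = K then e else extPath t next (t e) (j' - K - 1)) = x j'
      rw [if_pos (show j' < K by omega)]
    · show s (if 0 < K then x 0 else if (0 : ℕ) = K then e else extPath t next (t e) (0 - K - 1)) =
          s (x 0)
      rw [if_pos (show 0 < K by omega)]
    · show (if M + j + p < K then x (M + j + p) else if M + j + p = K then e
          else extPath t next (t e) (M + j + p - K - 1)) ≠
        (if M + j < K then x (M + j) else if M + j = K then e
          else extPath t next (t e) (M + j - K - 1))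
      rw [if_neg (show ¬ (M + j + p < K) by omega), if_pos (show M + j + p = K by omega),
        if_pos (show M + j < K by omega)]
      exact hne

end AuxStmt16

/-- in a row-finite graph without sinks in which every cycle has an
exit, every vertex is the source of an aperiodic infinite path. -/
theorem stmt16 (s t : E → V) (hrf : RowFinite s) (hns : NoSinks s)
    (hex : ∀ c : FPath s t, IsCycle c → HasExit c) :
    ∀ v : V, ∃ x : InfPath s t, s (x.1 0) = v ∧ ¬ EvPeriodic x.1 := by
  intro v
  choose next hnext using hns
  have hstep := step_lemma s t next hnext hex
  choose xf mf hinf hlt hagree hsrcp hbrk using hstep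
  set T := {q : (ℕ → E) × ℕ // IsInfPath s t q.1} with hT
  set base : T := ⟨(extPath t next v, 1), extPath_isInf s t next hnext v⟩ with hbase
  set succ : ℕ → T → T := fun k prev =>
    ⟨(xf prev.1.1 prev.2 prev.1.2 (Nat.unpair k).1 ((Nat.unpair k).2 + 1) (Nat.le_add_left 1 _),
      mf prev.1.1 prev.2 prev.1.2 (Nat.unpair k).1 ((Nat.unpair k).2 + 1) (Nat.le_add_left 1 _)),
     hinf _ _ _ _ _ _⟩ with hsucc
  set X : ℕ → T := fun k => Nat.rec base succ k with hX
  have hXs : ∀ k, X (k + 1) = succ k (X k) := fun _ => rfl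
  have hmono : ∀ k, (X k).1.2 < (X (k + 1)).1.2 := by
    intro k
    rw [hXs k, hsucc]
    exact hlt _ _ _ _ _ _
  have hagr : ∀ k j, j < (X k).1.2 → (X (k + 1)).1.1 j = (X k).1.1 j := by
    intro k j hj
    rw [hXs k, hsucc]
    exact hagree _ _ _ _ _ _ j hj
  have hbr : ∀ k, ∃ i, (Nat.unpair k).1 ≤ i ∧ i + ((Nat.unpair k).2 + 1) < (X (k + 1)).1.2 ∧
      (X (k + 1)).1.1 (i + ((Nat.unpair k).2 + 1)) ≠ (X (k + 1)).1.1 i := by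
    intro k
    rw [hXs k, hsucc]
    exact hbrk _ _ _ _ _ _
  have hsr : ∀ k, s ((X k).1.1 0) = v := by
    intro k
    induction k with
    | zero =>
      show s (extPath t next v 0) = v
      simp [extPath, hnext]
    | succ k ih =>
      rw [hXs k, hsucc]
      exact (hsrcp _ _ _ _ _ _).trans ih
  have hmono2 : ∀ k k', k ≤ k' → (X k).1.2 ≤ (X k').1.2 := by
    intro k k' h
    induction k' , h using Nat.le_induction with
    | base => exact le_rfl
    | succ k' h ih => exact le_trans ih (le_of_lt (hmono k'))
  have hge : ∀ k, k + 1 ≤ (X k).1.2 := by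
    intro k
    induction k with
    | zero => exact le_rfl
    | succ k ih => exact lt_of_le_of_lt ih (hmono k)
  have hagr2 : ∀ k k', k ≤ k' → ∀ j, j < (X k).1.2 → (X k').1.1 j = (X k).1.1 j := by
    intro k k' h
    induction k' , h using Nat.le_induction with
    | base => intro j _; rfl
    | succ k' h ih =>
      intro j hj
      rw [hagr k' j (lt_of_lt_of_le hj (hmono2 k k' h))]
      exact ih j hj
  set x : ℕ → E := fun j => (X (j + 1)).1.1 j with hxdef
  have hxk : ∀ k j, j < (X k).1.2 → x j = (X k).1.1 j := by
    intro k j hj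
    rcases le_total k (j + 1) with h | h
    · exact hagr2 k (j + 1) h j hj
    · exact (hagr2 (j + 1) k h j (lt_of_lt_of_le (Nat.lt_succ_self j) (le_of_lt (hge (j + 1))))).symm
  have hxinf : IsInfPath s t x := by
    intro i
    have hc2 : i + 3 ≤ (X (i + 2)).1.2 := hge (i + 2)
    rw [hxk (i + 2) i (by omega), hxk (i + 2) (i + 1) (by omega)]
    exact (X (i + 2)).2 i
  refine ⟨⟨x, hxinf⟩, ?_, ?_⟩
  · have h0 : (0 : ℕ) < (X 0).1.2 := hge 0
    rw [show (⟨x, hxinf⟩ : InfPath s t).1 = x from rfl, hxk 0 0 h0]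
    exact hsr 0
  · rintro ⟨N, p, hp, hper⟩
    have hup : (Nat.unpair (Nat.pair N (p - 1))).1 = N := by rw [Nat.unpair_pair]
    have hup2 : (Nat.unpair (Nat.pair N (p - 1))).2 + 1 = p := by
      rw [Nat.unpair_pair]
      show p - 1 + 1 = p
      omega
    obtain ⟨i, hiN, him, hne⟩ := hbr (Nat.pair N (p - 1))
    rw [hup] at hiN
    rw [hup2] at him hne
    apply hne
    rw [← hxk (Nat.pair N (p - 1) + 1) (i + p) him,
      ← hxk (Nat.pair N (p - 1) + 1) i (by omega)]
    exact hper i hiN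
end
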